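/- arXiv:1511.07292 — 2 statements merged into one kernel-verified Lean document; each statement's English description precedes it below -/
import Mathlib

section
/- Let $\alpha \in K^M_*(F)$ be a homogeneous element of positive degree that can be written as a sum $\alpha = \alpha_1 + \cdots + \alpha_k$ of $k$ pure symbols (products of degree-one elements). Then $\alpha^{k+1} = \{-1\}^n \gamma$ for some $\gamma \in K^M_*(F)$, where $n$ is the degree of $\alpha$. -/
/-!
The argument works for any Steinberg symbol `σ : Fˣ → R` into a ring (`σ (ab) = σ a + σ b`,
and `σ a * σ b = 0` when `a + b = 1`) whose values generate `R`, such as `MilnorSymbol`.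
From `{a}{-a} = 0` one gets anticommutativity and `{a}² = {-1}{a}`, hence for pure symbols
`β β' = (-1)^(n m) β' β` and `β² = {-1}ⁿ β`. Since `{-1}ⁿ` commutes with every symbol up to
sign, `{-1}ⁿ K` is a two-sided ideal, and modulo it the pure symbols of degree `n` square to
zero and commute (`n` even) or anticommute (`n` odd). A sum of `k` such elements then has
vanishing `(k+1)`-st power: in the commuting case by the binomial theorem, in the
anticommuting case because the sum already squares to zero.
-/

open TensorAlgebra in
/-- The Steinberg relations on the tensor algebra of the units `Fˣ` (written additively):
`{a}·{1-a} = 0` for `a ≠ 0, 1`. -/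
inductive SteinbergRel (F : Type*) [Field F] :
    TensorAlgebra ℤ (Additive Fˣ) → TensorAlgebra ℤ (Additive Fˣ) → Prop
  | steinberg (a : Fˣ) (h : (a : F) ≠ 1) :
      SteinbergRel F
        ((ι ℤ (Additive.ofMul a)) *
          (ι ℤ (Additive.ofMul (Units.mk0 ((1 : F) - a) (sub_ne_zero.mpr (Ne.symm h))))))
        0

/-- The Milnor K-ring `K^M_*(F)` of a field `F`: the tensor algebra on `Fˣ`
modulo the Steinberg relations. -/
abbrev MilnorK (F : Type*) [Field F] := RingQuot (SteinbergRel F)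

/-- The degree-one symbol `{a} ∈ K^M_1(F)`; it satisfies `{ab} = {a} + {b}`. -/
noncomputable def MilnorSymbol (F : Type*) [Field F] (a : Fˣ) : MilnorK F :=
  RingQuot.mkRingHom (SteinbergRel F) (TensorAlgebra.ι ℤ (Additive.ofMul a))

/-- A pure symbol `{a₁}⋯{aₙ}`, i.e. a product of degree-one symbols. -/
noncomputable def pureSymbol (F : Type*) [Field F] (l : List Fˣ) : MilnorK F :=
  (l.map (MilnorSymbol F)).prod

/-- The homogeneous degree-`n` part of the Milnor K-ring: sums of pure symbols of degree `n`. -/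
def milnorHomog (F : Type*) [Field F] (n : ℕ) : AddSubgroup (MilnorK F) :=
  AddSubgroup.closure { x | ∃ l : List Fˣ, l.length = n ∧ x = pureSymbol F l }

section

variable {R : Type*} [Ring R]

theorem List.mul_sum_eq_neg_sum_mul_of_anticomm (a : R) (xs : List R)
    (h : ∀ y ∈ xs, a * y = -(y * a)) : a * xs.sum = -(xs.sum * a) := by
  induction xs with
  | nil => simp
  | cons b t ih =>
    simp only [List.mem_cons, forall_eq_or_imp] at h
    rw [List.sum_cons, mul_add, add_mul, h.1, ih h.2, neg_add]

theorem List.sum_mul_self_eq_zero_of_anticomm (xs : List R) (hsq : ∀ x ∈ xs, x * x = 0)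
    (hanti : ∀ x ∈ xs, ∀ y ∈ xs, x * y = -(y * x)) : xs.sum * xs.sum = 0 := by
  induction xs with
  | nil => simp
  | cons a t ih =>
    simp only [List.mem_cons, forall_eq_or_imp] at hsq hanti
    have ht : t.sum * t.sum = 0 := ih hsq.2 fun x hx y hy => (hanti.2 x hx).2 y hy
    have hat : a * t.sum = -(t.sum * a) :=
      t.mul_sum_eq_neg_sum_mul_of_anticomm a fun y hy => hanti.1.2 y hy
    rw [List.sum_cons, add_mul, mul_add, mul_add, hsq.1, ht, hat]
    abel

theorem List.sum_pow_length_succ_eq_zero_of_commute (xs : List R) (hsq : ∀ x ∈ xs, x * x = 0)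
    (hcomm : ∀ x ∈ xs, ∀ y ∈ xs, Commute x y) : xs.sum ^ (xs.length + 1) = 0 := by
  induction xs with
  | nil => simp
  | cons a t ih =>
    simp only [List.mem_cons, forall_eq_or_imp] at hsq hcomm
    have ht : t.sum ^ (t.length + 1) = 0 := ih hsq.2 fun x hx y hy => (hcomm.2 x hx).2 y hy
    have hat : Commute a t.sum := .list_sum_right a t fun y hy => hcomm.1.2 y hy
    have ha : a ^ 2 = 0 := by rw [sq, hsq.1]
    exact hat.add_pow_eq_zero_of_add_le_succ_of_pow_eq_zero ha ht (by simp; omega)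

theorem List.sum_pow_length_succ_eq_zero (xs : List R) (n : ℕ) (hsq : ∀ x ∈ xs, x * x = 0)
    (hcomm : ∀ x ∈ xs, ∀ y ∈ xs, x * y = (-1 : ℤ) ^ n • (y * x)) :
    xs.sum ^ (xs.length + 1) = 0 := by
  rcases n.even_or_odd with hn | hn
  · refine xs.sum_pow_length_succ_eq_zero_of_commute hsq fun x hx y hy => ?_
    simpa [Commute, SemiconjBy, hn.neg_one_pow] using hcomm x hx y hy
  · cases xs with
    | nil => simp
    | cons a t =>
      have h2 := (a :: t).sum_mul_self_eq_zero_of_anticomm hsq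
        fun x hx y hy => by simpa [hn.neg_one_pow] using hcomm x hx y hy
      rw [List.length_cons, pow_succ, pow_succ, mul_assoc, h2, mul_zero]

def TwoSidedIdeal.principalOfNormal (s : R) (hs : ∀ x, ∃ y, x * s = s * y) : TwoSidedIdeal R :=
  .mk' {x | ∃ γ, x = s * γ} ⟨0, (mul_zero s).symm⟩
    (fun ⟨γ, hγ⟩ ⟨δ, hδ⟩ => ⟨γ + δ, by rw [hγ, hδ, mul_add]⟩)
    (fun ⟨γ, hγ⟩ => ⟨-γ, by rw [hγ, mul_neg]⟩)
    (fun {x _} ⟨γ, hγ⟩ => by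
      obtain ⟨y, hy⟩ := hs x
      exact ⟨y * γ, by rw [hγ, ← mul_assoc, hy, mul_assoc]⟩)
    (fun {_ y} ⟨γ, hγ⟩ => ⟨γ * y, by rw [hγ, mul_assoc]⟩)

theorem TwoSidedIdeal.mem_principalOfNormal {s : R} {hs : ∀ x, ∃ y, x * s = s * y} {x : R} :
    x ∈ principalOfNormal s hs ↔ ∃ γ, x = s * γ :=
  mem_mk' ..

end

structure IsSteinbergSymbol {F R : Type*} [Field F] [Ring R] (σ : Fˣ → R) : Prop where
  map_mul : ∀ a b, σ (a * b) = σ a + σ b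
  mul_eq_zero_of_add_eq_one : ∀ a b : Fˣ, (a : F) + b = 1 → σ a * σ b = 0

namespace IsSteinbergSymbol

variable {F R : Type*} [Field F] [Ring R] {σ : Fˣ → R} (hσ : IsSteinbergSymbol σ)
include hσ

theorem map_one : σ 1 = 0 := by
  simpa using hσ.map_mul 1 1

theorem map_inv (a : Fˣ) : σ a⁻¹ = -σ a :=
  eq_neg_of_add_eq_zero_left <| by rw [← hσ.map_mul, inv_mul_cancel, hσ.map_one]

theorem mul_map_neg_self (a : Fˣ) : σ a * σ (-a) = 0 := by
  by_cases ha : (a : F) = 1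
  · rw [Units.val_eq_one.mp ha, hσ.map_one, zero_mul]
  have ha' : ((a⁻¹ : Fˣ) : F) ≠ 1 := by simpa using ha
  set u := Units.mk0 (1 - (a : F)) (sub_ne_zero.mpr (Ne.symm ha))
  set v := Units.mk0 (1 - ((a⁻¹ : Fˣ) : F)) (sub_ne_zero.mpr (Ne.symm ha'))
  have hneg : -a = u * v⁻¹ := by
    have hv : (1 : F) - (a : F)⁻¹ ≠ 0 := by simpa using sub_ne_zero.mpr (Ne.symm ha')
    ext
    simp only [Units.val_neg, Units.val_inv_eq_inv_val, Units.val_mul, Units.val_mk0, u, v]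
    field_simp
    ring
  have hu := hσ.mul_eq_zero_of_add_eq_one a u (by simp [u])
  have hv := hσ.mul_eq_zero_of_add_eq_one a⁻¹ v (by simp [v])
  rw [hσ.map_inv, neg_mul, neg_eq_zero] at hv
  rw [hneg, hσ.map_mul, hσ.map_inv, mul_add, mul_neg, hu, hv, neg_zero, add_zero]

theorem anticomm (a b : Fˣ) : σ a * σ b = -(σ b * σ a) := by
  have ha : σ a * σ (-(a * b)) = σ a * σ b := by
    rw [← neg_mul, hσ.map_mul, mul_add, hσ.mul_map_neg_self, zero_add]
  have hb : σ b * σ (-(a * b)) = σ b * σ a := by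
    rw [← mul_neg, hσ.map_mul, mul_add, hσ.mul_map_neg_self, add_zero]
  have h := hσ.mul_map_neg_self (a * b)
  rw [hσ.map_mul, add_mul, ha, hb] at h
  exact eq_neg_of_add_eq_zero_left h

theorem mul_self (a : Fˣ) : σ a * σ a = σ (-1) * σ a := by
  have h := hσ.mul_map_neg_self a
  rw [← neg_one_mul, hσ.map_mul, mul_add, hσ.anticomm a (-1), neg_add_eq_zero] at h
  exact h.symm

theorem apply_mul_prod (a : Fˣ) (l : List Fˣ) :
    σ a * (l.map σ).prod = (-1 : ℤ) ^ l.length • ((l.map σ).prod * σ a) := by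
  induction l with
  | nil => simp
  | cons b t ih =>
    rw [List.map_cons, List.prod_cons, ← mul_assoc, hσ.anticomm a b, neg_mul, mul_assoc, ih]
    simp only [List.length_cons, pow_succ, mul_neg_one, neg_smul, mul_smul_comm, mul_assoc]

theorem prod_mul_prod (l m : List Fˣ) :
    (l.map σ).prod * (m.map σ).prod =
      (-1 : ℤ) ^ (l.length * m.length) • ((m.map σ).prod * (l.map σ).prod) := by
  induction l with
  | nil => simp
  | cons b t ih =>
    rw [List.map_cons, List.prod_cons, mul_assoc, ih, mul_smul_comm, ← mul_assoc,
      hσ.apply_mul_prod]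
    simp only [List.length_cons, add_mul, one_mul, pow_add, mul_smul, smul_mul_assoc, mul_assoc]

theorem prod_mul_apply (l : List Fˣ) (a : Fˣ) :
    (l.map σ).prod * σ a = (-1 : ℤ) ^ l.length • (σ a * (l.map σ).prod) := by
  simpa using hσ.prod_mul_prod l [a]

theorem apply_mul_pow_neg_one (a : Fˣ) (n : ℕ) :
    σ a * σ (-1) ^ n = (-1 : ℤ) ^ n • (σ (-1) ^ n * σ a) := by
  simpa using hσ.apply_mul_prod a (List.replicate n (-1))

theorem prod_mul_self (l : List Fˣ) :
    (l.map σ).prod * (l.map σ).prod = σ (-1) ^ l.length * (l.map σ).prod := by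
  induction l with
  | nil => simp
  | cons a t ih =>
    set P := (t.map σ).prod
    rw [List.map_cons, List.prod_cons, List.length_cons]
    calc σ a * P * (σ a * P) = σ a * (P * σ a * P) := by simp only [mul_assoc]
      _ = (-1 : ℤ) ^ t.length • (σ a * σ a * (P * P)) := by
        rw [hσ.prod_mul_apply t a]
        simp only [smul_mul_assoc, mul_smul_comm, mul_assoc, P]
      _ = (-1 : ℤ) ^ t.length • (σ (-1) * (σ a * σ (-1) ^ t.length) * P) := by
        rw [hσ.mul_self, ih]; simp only [mul_assoc]
      _ = σ (-1) ^ (t.length + 1) * (σ a * P) := by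
        rw [hσ.apply_mul_pow_neg_one]
        simp only [mul_smul_comm, smul_mul_assoc, smul_smul, ← mul_pow, neg_one_mul, neg_neg,
          one_pow, one_smul, pow_succ', mul_assoc]

theorem exists_mul_pow_neg_one_eq (hgen : Subring.closure (Set.range σ) = ⊤) (n : ℕ) (x : R) :
    ∃ y, x * σ (-1) ^ n = σ (-1) ^ n * y := by
  have hx : x ∈ Subring.closure (Set.range σ) := hgen ▸ Subring.mem_top x
  induction hx using Subring.closure_induction with
  | mem _ h =>
    obtain ⟨a, rfl⟩ := h
    exact ⟨(-1 : ℤ) ^ n • σ a, by rw [hσ.apply_mul_pow_neg_one, mul_smul_comm]⟩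
  | zero => exact ⟨0, by rw [zero_mul, mul_zero]⟩
  | one => exact ⟨1, by rw [one_mul, mul_one]⟩
  | add x y _ _ hx hy =>
    obtain ⟨x', hx'⟩ := hx
    obtain ⟨y', hy'⟩ := hy
    exact ⟨x' + y', by rw [add_mul, mul_add, hx', hy']⟩
  | neg x _ hx =>
    obtain ⟨x', hx'⟩ := hx
    exact ⟨-x', by rw [neg_mul, mul_neg, hx']⟩
  | mul x y _ _ hx hy =>
    obtain ⟨x', hx'⟩ := hx
    obtain ⟨y', hy'⟩ := hy
    exact ⟨x' * y', by rw [mul_assoc, hy', ← mul_assoc, hx', mul_assoc]⟩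

theorem exists_sum_pow_eq_pow_neg_one_mul (hgen : Subring.closure (Set.range σ) = ⊤) (n : ℕ)
    (L : List (List Fˣ)) (hL : ∀ l ∈ L, l.length = n) :
    ∃ γ, (L.map fun l => (l.map σ).prod).sum ^ (L.length + 1) = σ (-1) ^ n * γ := by
  let I := TwoSidedIdeal.principalOfNormal (σ (-1) ^ n) (hσ.exists_mul_pow_neg_one_eq hgen n)
  let π := I.ringCon.mk'
  have hker : ∀ x, π x = 0 ↔ ∃ γ, x = σ (-1) ^ n * γ := fun x => by
    rw [← TwoSidedIdeal.mem_ker, TwoSidedIdeal.ker_ringCon_mk',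
      TwoSidedIdeal.mem_principalOfNormal]
  have hπ : π (σ (-1) ^ n) = 0 := (hker _).2 ⟨1, (mul_one _).symm⟩
  refine (hker _).1 ?_
  rw [map_pow, map_list_sum, List.map_map, ← L.length_map (π ∘ fun l => (l.map σ).prod)]
  apply List.sum_pow_length_succ_eq_zero _ (n * n) <;> simp only [List.mem_map]
  · rintro _ ⟨l, hl, rfl⟩
    rw [Function.comp_apply, ← π.map_mul, hσ.prod_mul_self, π.map_mul, hL l hl, hπ, zero_mul]
  · rintro _ ⟨l, hl, rfl⟩ _ ⟨m, hm, rfl⟩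
    rw [Function.comp_apply, Function.comp_apply, ← π.map_mul, hσ.prod_mul_prod, hL l hl,
      hL m hm, map_zsmul, π.map_mul]

end IsSteinbergSymbol

section MilnorK

variable {F : Type*} [Field F]

theorem isSteinbergSymbol_milnorSymbol : IsSteinbergSymbol (MilnorSymbol F) where
  map_mul a b := by simp only [MilnorSymbol, ofMul_mul, map_add]
  mul_eq_zero_of_add_eq_one a b h := by
    have ha : (a : F) ≠ 1 := fun ha => b.ne_zero (by linear_combination h - ha)
    have hb : b = Units.mk0 (1 - (a : F)) (sub_ne_zero.mpr (Ne.symm ha)) :=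
      Units.ext (by simp only [Units.val_mk0]; linear_combination h)
    have := RingQuot.mkRingHom_rel (SteinbergRel.steinberg a ha)
    rw [map_mul, map_zero] at this
    rwa [hb]

theorem closure_range_milnorSymbol : Subring.closure (Set.range (MilnorSymbol F)) = ⊤ := by
  refine eq_top_iff.2 ?_
  rintro x -
  obtain ⟨z, rfl⟩ := RingQuot.mkRingHom_surjective (SteinbergRel F) x
  induction z using TensorAlgebra.induction with
  | algebraMap r => simp
  | ι v => exact Subring.subset_closure ⟨Additive.toMul v, rfl⟩
  | mul x y hx hy => rw [map_mul]; exact mul_mem hx hy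
  | add x y hx hy => rw [map_add]; exact add_mem hx hy

end MilnorK

theorem milnor_sum_power_general (F : Type*) [Field F] (n : ℕ)
    (L : List (List Fˣ)) (hL : ∀ l ∈ L, l.length = n)
    (α : MilnorK F) (hα : α = (L.map (pureSymbol F)).sum) :
    ∃ γ : MilnorK F, α ^ (L.length + 1) = MilnorSymbol F (-1) ^ n * γ := by
  subst hα
  exact isSteinbergSymbol_milnorSymbol.exists_sum_pow_eq_pow_neg_one_mul
    closure_range_milnorSymbol n L hL

/-- if `α = α₁ + ⋯ + α_k` is a sum of `k` pure symbols of degree `n > 0`,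
then `α^(k+1) = {-1}ⁿ γ` for some `γ`. -/
theorem milnor_sum_power (F : Type*) [Field F] (n : ℕ) (hn : 0 < n)
    (L : List (List Fˣ)) (hL : ∀ l ∈ L, l.length = n)
    (α : MilnorK F) (hα : α = (L.map (pureSymbol F)).sum) :
    ∃ γ : MilnorK F, α ^ (L.length + 1) = MilnorSymbol F (-1) ^ n * γ :=
  milnor_sum_power_general F n L hL α hα
end

section
/- Let $R$ be a commutative ring that is the fiber product of $\mathbb{Z}$ and a commutative ring $W$ over $\mathbb{Z}/2$ (with the surjection $\mathbb{Z} \twoheadrightarrow \mathbb{Z}/2$ and a ring map $W \to \mathbb{Z}/2$). If in $W$ all torsion is 2-primary and nilpotents are exactly the torsion elements in the kernel of $W \to \mathbb{Z}/2$, then in $R$ all torsion is 2-primary and nilpotents are exactly the torsion elements. -/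
theorem Prod.isNilpotent_iff {A B : Type*} [MonoidWithZero A] [MonoidWithZero B] {x : A × B} :
    IsNilpotent x ↔ IsNilpotent x.1 ∧ IsNilpotent x.2 := by
  refine ⟨fun ⟨n, hn⟩ ↦ ⟨⟨n, congrArg Prod.fst hn⟩, ⟨n, congrArg Prod.snd hn⟩⟩, ?_⟩
  rintro ⟨⟨m, hm⟩, ⟨n, hn⟩⟩
  exact ⟨max m n, Prod.ext (pow_eq_zero_of_le (le_max_left m n) hm)
    (pow_eq_zero_of_le (le_max_right m n) hn)⟩

section SubringOfProd

variable {A B : Type*} [Ring A] [Ring B] {S : Subring (A × B)}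

theorem Subring.isNilpotent_coe_iff {x : S} : IsNilpotent (x : A × B) ↔ IsNilpotent x :=
  IsNilpotent.map_iff (F := S →+* A × B) (f := S.subtype) Subtype.coe_injective

theorem Subring.isOfFinAddOrder_iff_fst_eq_zero [IsAddTorsionFree A] {x : S} :
    IsOfFinAddOrder x ↔ (x : A × B).1 = 0 ∧ IsOfFinAddOrder (x : A × B).2 := by
  rw [← AddSubmonoid.isOfFinAddOrder_coe (H := S.toAddSubmonoid), IsOfFinAddOrder.prod_iff,
    isOfFinAddOrder_iff_eq_zero]

theorem Subring.isNilpotent_iff_fst_eq_zero [IsReduced A] {x : S} :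
    IsNilpotent x ↔ (x : A × B).1 = 0 ∧ IsNilpotent (x : A × B).2 := by
  rw [← isNilpotent_coe_iff, Prod.isNilpotent_iff, isNilpotent_iff_eq_zero]

theorem Subring.nsmul_eq_zero_of_fst_eq_zero {x : S} (h : (x : A × B).1 = 0) {n : ℕ}
    (hn : n • (x : A × B).2 = 0) : n • x = 0 :=
  Subtype.ext (Prod.ext (by simp [h]) (by simpa using hn))

end SubringOfProd

/-- let `R = ℤ ×_{ℤ/2} W` be the fiber product of `ℤ` (via reduction mod 2)
and a commutative ring `W` (via a ring map `f : W → ℤ/2`), realized as the subring of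
`ℤ × W` of pairs with matching images in `ℤ/2`. If in `W` all torsion is 2-primary and
the nilpotents are exactly the torsion elements of `ker f`, then in `R` all torsion is
2-primary and the nilpotents are exactly the torsion elements. -/
theorem fiber_product_torsion_nilpotent
    (W : Type*) [CommRing W] (f : W →+* ZMod 2)
    (h1 : ∀ w : W, IsOfFinAddOrder w → ∃ k : ℕ, (2 ^ k : ℕ) • w = 0)
    (h2 : ∀ w : W, IsNilpotent w ↔ (IsOfFinAddOrder w ∧ f w = 0)) :
    let R : Subring (ℤ × W) :=
      RingHom.eqLocus ((Int.castRingHom (ZMod 2)).comp (RingHom.fst ℤ W))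
        (f.comp (RingHom.snd ℤ W))
    (∀ x : R, IsOfFinAddOrder x → ∃ k : ℕ, (2 ^ k : ℕ) • x = 0) ∧
    (∀ x : R, IsNilpotent x ↔ IsOfFinAddOrder x) := by
  intro R
  refine ⟨fun x hx ↦ ?_, fun x ↦ ?_⟩
  · obtain ⟨hfst, hsnd⟩ := Subring.isOfFinAddOrder_iff_fst_eq_zero.1 hx
    obtain ⟨k, hk⟩ := h1 _ hsnd
    exact ⟨k, Subring.nsmul_eq_zero_of_fst_eq_zero hfst hk⟩
  · have f_snd_eq_zero (hfst : (x : ℤ × W).1 = 0) : f (x : ℤ × W).2 = 0 := by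
      simpa [hfst] using x.2.symm
    rw [Subring.isNilpotent_iff_fst_eq_zero, Subring.isOfFinAddOrder_iff_fst_eq_zero, h2]
    exact and_congr_right fun hfst ↦ and_iff_left (f_snd_eq_zero hfst)
end
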